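/- Let X be a finitely generated A_n-module annihilated by t (so that X is a kG-module), and let φ: X → A_n^{⊕r} be an injective A_n-linear map for some non-negative integer r. Writing C for the cokernel of φ, there is an isomorphism of A_{n-1}-modules C/t^{n-1}C ≅ A_{n-1}^{⊕r}; in particular, C/t^{n-1}C is a projective A_{n-1}-module. -/

import Mathlib

open scoped TensorProduct DirectSum

noncomputable section

variable (S : Type) [CommRing S] [IsDomain S] [IsDiscreteValuationRing S]
variable (t : S)
variable (G : Type) [Group G] [Fintype G]

/-- `Rq n` is the quotient ring `R_n = S/(t^n)`. -/
abbrev Rq (n : ℕ) : Type := S ⧸ Ideal.span {t ^ n}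

/-- `Aq n` is the group algebra `A_n = R_n G`. -/
abbrev Aq (n : ℕ) : Type := MonoidAlgebra (Rq S t n) G

/-- The canonical surjection `R_n → R_i` for `i ≤ n`. -/
def Rmap (i n : ℕ) (h : i ≤ n) : Rq S t n →+* Rq S t i :=
  Ideal.Quotient.factor (Ideal.span_singleton_le_span_singleton.mpr (pow_dvd_pow t h))

/-- The canonical surjection `A_n → A_i` for `i ≤ n`, induced by `R_n → R_i`. -/
def Amap (i n : ℕ) (h : i ≤ n) : Aq S t G n →+* Aq S t G i :=
  letI : Algebra (Rq S t n) (Aq S t G i) :=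
    RingHom.toAlgebra' ((algebraMap (Rq S t i) (Aq S t G i)).comp (Rmap S t i n h))
      (fun r x => Algebra.commutes (Rmap S t i n h r) x)
  ((MonoidAlgebra.lift (Rq S t n) (Aq S t G i) G) (MonoidAlgebra.of (Rq S t i) G)).toRingHom

/-- The augmentation map `A_n → R_n`, `Σ r_g g ↦ Σ r_g`. -/
def aug (n : ℕ) : Aq S t G n →+* Rq S t n :=
  ((MonoidAlgebra.lift (Rq S t n) (Rq S t n) G) 1).toRingHom

/-- The image of `t` in `R_n`. -/
def tbar (n : ℕ) : Rq S t n := Ideal.Quotient.mk _ t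

/-- The norm element `Σ_{g ∈ G} g` of `A_n`. -/
def sigmaEl (n : ℕ) : Aq S t G n := ∑ g : G, MonoidAlgebra.of (Rq S t n) G g

/-- The element `t^{i-1} Σ_{g ∈ G} g` of `A_i`. -/
def wEl (i : ℕ) : Aq S t G i :=
  algebraMap (Rq S t i) (Aq S t G i) (tbar S t i ^ (i - 1)) * sigmaEl S t G i

/-- `W_i = A_i/⟨t^{i-1} Σ_{g∈G} g⟩`. -/
abbrev Wmod (i : ℕ) : Type :=
  Aq S t G i ⧸ Submodule.span (Aq S t G i) {wEl S t G i}

/-- The submodule `t^m X` of an `A_n`-module `X`. -/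
def tSub (n m : ℕ) (X : Type) [AddCommGroup X] [Module (Aq S t G n) X] :
    Submodule (Aq S t G n) X :=
  Submodule.span (Aq S t G n)
    (Set.range fun x : X => algebraMap (Rq S t n) (Aq S t G n) (tbar S t n ^ m) • x)

/-!
Since `t` kills `X`, every coordinate of `φ x` is `t`-torsion in `A_n`, and in `R_n = S/(t^n)`
over a domain the `t`-torsion is `t^{n-1} R_n`. Hence the image of `φ` lies in `t^{n-1} A_n^r`,
so `C/t^{n-1}C = A_n^r/t^{n-1}A_n^r`, and reducing coefficients modulo `t^{n-1}` identifies
this with `A_{n-1}^r`. The `A_{n-1}`-module structure is transported along that identification.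
-/

theorem MonoidAlgebra.exists_eq_smul_of_dvd_coeff {R M : Type*} [Semiring R] [Finite M] {c : R}
    {a : MonoidAlgebra R M} (h : ∀ m, c ∣ a.coeff m) : ∃ b, a = c • b := by
  choose u hu using h
  have := Fintype.ofFinite M
  refine ⟨MonoidAlgebra.ofCoeff (Finsupp.equivFunOnFinite.symm u), ?_⟩
  ext m
  simp [hu]

theorem exists_module_linearEquiv_of_bijective {R R' M P : Type*} [Semiring R] [Semiring R']
    [AddCommMonoid M] [Module R M] [AddCommMonoid P] [Module R' P] {σ : R →+* R'}
    (f : M →ₛₗ[σ] P) (hf : Function.Bijective f) :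
    ∃ inst : Module R' M, (∀ (a : R) (m : M), letI := inst; σ a • m = a • m) ∧
      letI := inst; Nonempty (M ≃ₗ[R'] P) := by
  let e : M ≃+ P := AddEquiv.ofBijective (f : M →+ P) hf
  let _ : SMul R' M := ⟨fun a m => e.symm (a • e m)⟩
  have he_smul (a : R') (m : M) : e (a • m) = a • e m := e.apply_symm_apply _
  let inst : Module R' M := Function.Injective.module R' e.toAddMonoidHom e.injective he_smul
  refine ⟨inst, fun a m => e.injective ?_, ⟨{ e with map_smul' := he_smul }⟩⟩
  rw [he_smul]
  exact (f.map_smulₛₗ a m).symm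

theorem exists_bijective_quotient_quotient_of_le_ker {R R' M P : Type*} [Ring R] [Ring R']
    [AddCommGroup M] [Module R M] [AddCommGroup P] [Module R' P] {σ : R →+* R'}
    (f : M →ₛₗ[σ] P) (hf : Function.Surjective f) {N : Submodule R M}
    (hN : N ≤ LinearMap.ker f) {T : Submodule R (M ⧸ N)}
    (hT : T = (LinearMap.ker f).map N.mkQ) :
    ∃ F : (M ⧸ N) ⧸ T →ₛₗ[σ] P, Function.Bijective F := by
  subst hT
  have hbij : Function.Bijective ((LinearMap.ker f).liftQ f le_rfl) := by
    refine ⟨LinearMap.ker_eq_bot.mp (Submodule.ker_liftQ_eq_bot' _ f rfl), fun p => ?_⟩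
    obtain ⟨m, rfl⟩ := hf p
    exact ⟨Submodule.Quotient.mk m, rfl⟩
  let e := Submodule.quotientQuotientEquivQuotient N (LinearMap.ker f) hN
  exact ⟨((LinearMap.ker f).liftQ f le_rfl).comp e.toLinearMap, hbij.comp e.bijective⟩

def algebraMapSMulLinearMap {R : Type*} (A : Type*) [CommSemiring R] [Semiring A] [Algebra R A]
    (X : Type*) [AddCommMonoid X] [Module A X] (c : R) : X →ₗ[A] X where
  toFun x := algebraMap R A c • x
  map_add' := smul_add _
  map_smul' a x := by rw [smul_smul, smul_smul, Algebra.commutes, RingHom.id_apply]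

section

omit [IsDiscreteValuationRing S]

section

omit [IsDomain S] [Fintype G]

theorem Rmap_eq_zero_iff {i n : ℕ} (h : i ≤ n) (x : Rq S t n) :
    Rmap S t i n h x = 0 ↔ tbar S t n ^ i ∣ x := by
  rw [← RingHom.mem_ker, Rmap, Ideal.Quotient.factor_ker, Ideal.map_span, Set.image_singleton,
    Ideal.mem_span_singleton, map_pow, tbar]

theorem Amap_eq_mapRingHom {i n : ℕ} (h : i ≤ n) :
    Amap S t G i n h = MonoidAlgebra.mapRingHom G (Rmap S t i n h) := by
  ext <;> simp [Amap, Algebra.smul_def, RingHom.algebraMap_toAlgebra', MonoidAlgebra.coeff_single]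

theorem Rmap_surjective {i n : ℕ} (h : i ≤ n) : Function.Surjective (Rmap S t i n h) :=
  Ideal.Quotient.factor_surjective _

theorem Amap_surjective {i n : ℕ} (h : i ≤ n) : Function.Surjective (Amap S t G i n h) := by
  rw [Amap_eq_mapRingHom, MonoidAlgebra.coe_mapRingHom]
  exact MonoidAlgebra.map_surjective _ (Rmap_surjective S t h)

theorem tSub_eq_range (n m : ℕ) (X : Type) [AddCommGroup X] [Module (Aq S t G n) X] :
    tSub S t G n m X =
      LinearMap.range (algebraMapSMulLinearMap (Aq S t G n) X (tbar S t n ^ m)) := by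
  change Submodule.span _ (Set.range (algebraMapSMulLinearMap _ X (tbar S t n ^ m))) = _
  rw [← LinearMap.coe_range, Submodule.span_eq]

theorem tSub_quotient (n m : ℕ) {X : Type} [AddCommGroup X] [Module (Aq S t G n) X]
    (N : Submodule (Aq S t G n) X) : tSub S t G n m (X ⧸ N) = (tSub S t G n m X).map N.mkQ := by
  rw [tSub_eq_range, tSub_eq_range, ← LinearMap.range_comp,
    ← LinearMap.range_comp_of_range_eq_top _ (Submodule.range_mkQ N)]
  rfl

theorem mem_tSub_pi_iff (n m : ℕ) {ι : Type} (v : ι → Aq S t G n) :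
    v ∈ tSub S t G n m (ι → Aq S t G n) ↔ ∀ j, ∃ b, v j = tbar S t n ^ m • b := by
  simp only [tSub_eq_range, LinearMap.mem_range, algebraMapSMulLinearMap, LinearMap.coe_mk,
    AddHom.coe_mk, funext_iff, Pi.smul_apply, algebraMap_smul]
  constructor
  · rintro ⟨w, hw⟩ j
    exact ⟨w j, (hw j).symm⟩
  · intro h
    choose w hw using h
    exact ⟨w, fun j => (hw j).symm⟩

def piReduce (i n : ℕ) (h : i ≤ n) (ι : Type) :
    (ι → Aq S t G n) →ₛₗ[Amap S t G i n h] (ι → Aq S t G i) where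
  toFun v j := Amap S t G i n h (v j)
  map_add' _ _ := funext fun _ => map_add _ _ _
  map_smul' _ _ := funext fun _ => map_mul _ _ _

theorem piReduce_surjective (i n : ℕ) (h : i ≤ n) (ι : Type) :
    Function.Surjective (piReduce S t G i n h ι) := by
  intro u
  choose v hv using fun j => Amap_surjective S t G h (u j)
  exact ⟨v, funext hv⟩

end

theorem tbar_pow_pred_dvd_of_tbar_mul_eq_zero (ht : t ≠ 0) {n : ℕ} {x : Rq S t n}
    (hx : tbar S t n * x = 0) : tbar S t n ^ (n - 1) ∣ x := by
  obtain ⟨s, rfl⟩ := Ideal.Quotient.mk_surjective x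
  rcases n with _ | k
  · simp
  · rw [tbar, ← map_mul, Ideal.Quotient.eq_zero_iff_mem, Ideal.mem_span_singleton, pow_succ',
      mul_dvd_mul_iff_left ht] at hx
    simpa [tbar] using map_dvd (Ideal.Quotient.mk _) hx

theorem exists_eq_tbar_pow_pred_smul_of_tbar_smul_eq_zero (ht : t ≠ 0) {n : ℕ} {a : Aq S t G n}
    (ha : tbar S t n • a = 0) : ∃ b, a = tbar S t n ^ (n - 1) • b :=
  MonoidAlgebra.exists_eq_smul_of_dvd_coeff fun g =>
    tbar_pow_pred_dvd_of_tbar_mul_eq_zero S t ht (by simpa using congr(($ha).coeff g))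

section

omit [IsDomain S]

theorem Amap_eq_zero_iff {i n : ℕ} (h : i ≤ n) (a : Aq S t G n) :
    Amap S t G i n h a = 0 ↔ ∃ b, a = tbar S t n ^ i • b := by
  constructor
  · intro ha
    refine MonoidAlgebra.exists_eq_smul_of_dvd_coeff fun g => (Rmap_eq_zero_iff S t h _).mp ?_
    simpa [Amap_eq_mapRingHom] using congr(($ha).coeff g)
  · rintro ⟨b, rfl⟩
    ext g
    simpa [Amap_eq_mapRingHom] using (Rmap_eq_zero_iff S t h _).mpr (dvd_mul_right _ _)

theorem ker_piReduce (i n : ℕ) (h : i ≤ n) (ι : Type) :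
    LinearMap.ker (piReduce S t G i n h ι) = tSub S t G n i (ι → Aq S t G n) := by
  ext v
  rw [mem_tSub_pi_iff, LinearMap.mem_ker, funext_iff]
  exact forall_congr' fun j => Amap_eq_zero_iff S t G h (v j)

end

theorem range_le_tSub_pred (ht : t ≠ 0) {n : ℕ} {X : Type} [AddCommGroup X]
    [Module (Aq S t G n) X] {ι : Type} (φ : X →ₗ[Aq S t G n] (ι → Aq S t G n))
    (hann : ∀ x : X, algebraMap (Rq S t n) (Aq S t G n) (tbar S t n) • x = 0) :
    LinearMap.range φ ≤ tSub S t G n (n - 1) (ι → Aq S t G n) := by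
  rintro _ ⟨x, rfl⟩
  refine (mem_tSub_pi_iff S t G n (n - 1) _).mpr fun j =>
    exists_eq_tbar_pow_pred_smul_of_tbar_smul_eq_zero S t G ht ?_
  simpa only [map_smul, map_zero, Pi.smul_apply, Pi.zero_apply, algebraMap_smul] using
    congr((φ $(hann x)) j)

end

theorem statement10 (ht : Irreducible t) (n : ℕ)
    (X : Type) [AddCommGroup X] [Module (Aq S t G n) X]
    (hann : ∀ x : X, algebraMap (Rq S t n) (Aq S t G n) (tbar S t n) • x = 0)
    (r : ℕ) (φ : X →ₗ[Aq S t G n] (Fin r → Aq S t G n)) :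
    ∃ inst : Module (Aq S t G (n - 1))
        (((Fin r → Aq S t G n) ⧸ LinearMap.range φ) ⧸
          tSub S t G n (n - 1) ((Fin r → Aq S t G n) ⧸ LinearMap.range φ)),
      (∀ (a : Aq S t G n)
        (q : ((Fin r → Aq S t G n) ⧸ LinearMap.range φ) ⧸
          tSub S t G n (n - 1) ((Fin r → Aq S t G n) ⧸ LinearMap.range φ)),
        letI := inst
        Amap S t G (n - 1) n (Nat.sub_le n 1) a • q = a • q) ∧
      letI := inst
      Nonempty
        ((((Fin r → Aq S t G n) ⧸ LinearMap.range φ) ⧸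
            tSub S t G n (n - 1) ((Fin r → Aq S t G n) ⧸ LinearMap.range φ))
          ≃ₗ[Aq S t G (n - 1)] (Fin r → Aq S t G (n - 1))) ∧
      Module.Projective (Aq S t G (n - 1))
        (((Fin r → Aq S t G n) ⧸ LinearMap.range φ) ⧸
          tSub S t G n (n - 1) ((Fin r → Aq S t G n) ⧸ LinearMap.range φ)) := by
  have hker := ker_piReduce S t G (n - 1) n (Nat.sub_le n 1) (Fin r)
  obtain ⟨F, hF⟩ := exists_bijective_quotient_quotient_of_le_ker _
    (piReduce_surjective S t G (n - 1) n (Nat.sub_le n 1) (Fin r))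
    (hker ▸ range_le_tSub_pred S t G ht.ne_zero φ hann)
    ((tSub_quotient S t G n (n - 1) _).trans (by rw [hker]))
  obtain ⟨inst, hsmul, ⟨L⟩⟩ := exists_module_linearEquiv_of_bijective F hF
  refine ⟨inst, hsmul, ⟨L⟩, ?_⟩
  exact Module.Projective.of_equiv L.symm

end
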